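/- arXiv:2204.04996 — 3 statements merged into one kernel-verified Lean document; each statement's English description precedes it below -/
import Mathlib

section
/- Let p and q be orthogonal pure imaginary octonions. Then the left multiplication operators satisfy \(L_p \circ L_q = -L_q \circ L_p\) as linear maps on the octonions. -/
noncomputable section
open Quaternion

/-- The octonions, as the Cayley–Dickson double of the real quaternions. -/
@[ext] structure Oct : Type where
  x : ℍ[ℝ]
  y : ℍ[ℝ]

namespace Oct

instance : Zero Oct := ⟨⟨0, 0⟩⟩
instance : One Oct := ⟨⟨1, 0⟩⟩
instance : Add Oct := ⟨fun a b => ⟨a.x + b.x, a.y + b.y⟩⟩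
instance : Neg Oct := ⟨fun a => ⟨-a.x, -a.y⟩⟩
instance : Sub Oct := ⟨fun a b => ⟨a.x - b.x, a.y - b.y⟩⟩
instance : SMul ℝ Oct := ⟨fun r a => ⟨r • a.x, r • a.y⟩⟩
/-- Cayley–Dickson multiplication. -/
instance : Mul Oct := ⟨fun a b => ⟨a.x * b.x - star b.y * a.y, b.y * a.x + a.y * star b.x⟩⟩

@[simp] lemma zero_x : (0 : Oct).x = 0 := rfl
@[simp] lemma zero_y : (0 : Oct).y = 0 := rfl
@[simp] lemma one_x : (1 : Oct).x = 1 := rfl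
@[simp] lemma one_y : (1 : Oct).y = 0 := rfl
@[simp] lemma add_x (a b : Oct) : (a + b).x = a.x + b.x := rfl
@[simp] lemma add_y (a b : Oct) : (a + b).y = a.y + b.y := rfl
@[simp] lemma neg_x (a : Oct) : (-a).x = -a.x := rfl
@[simp] lemma neg_y (a : Oct) : (-a).y = -a.y := rfl
@[simp] lemma sub_x (a b : Oct) : (a - b).x = a.x - b.x := rfl
@[simp] lemma sub_y (a b : Oct) : (a - b).y = a.y - b.y := rfl
@[simp] lemma smul_x (r : ℝ) (a : Oct) : (r • a).x = r • a.x := rfl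
@[simp] lemma smul_y (r : ℝ) (a : Oct) : (r • a).y = r • a.y := rfl
@[simp] lemma mul_x (a b : Oct) : (a * b).x = a.x * b.x - star b.y * a.y := rfl
@[simp] lemma mul_y (a b : Oct) : (a * b).y = b.y * a.x + a.y * star b.x := rfl

instance : AddCommGroup Oct where
  add_assoc a b c := by ext <;> simp [add_assoc]
  zero_add a := by ext <;> simp
  add_zero a := by ext <;> simp
  add_comm a b := by ext <;> simp [add_comm]
  neg_add_cancel a := by ext <;> simp
  sub_eq_add_neg a b := by ext <;> simp [sub_eq_add_neg]
  nsmul := nsmulRec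
  zsmul := zsmulRec

instance : Module ℝ Oct where
  one_smul a := by ext <;> simp
  mul_smul r s a := by ext <;> simp [mul_smul]
  smul_zero r := by ext <;> simp
  smul_add r a b := by ext <;> simp
  add_smul r s a := by ext <;> simp [add_smul]
  zero_smul a := by ext <;> simp

/-- Octonion conjugation. -/
def conj (a : Oct) : Oct := ⟨star a.x, -a.y⟩

/-- Real part. -/
def re (a : Oct) : ℝ := a.x.re

/-- The inner product `⟨a,b⟩ = Re (a * conj b)`. -/
def inner (a b : Oct) : ℝ := re (a * conj b)

/-- Left multiplication. -/
def L (a : Oct) : Oct → Oct := fun v => a * v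

/-- Right multiplication. -/
def R (a : Oct) : Oct → Oct := fun v => v * a

lemma mul_add' (a u v : Oct) : a * (u + v) = a * u + a * v := by
  ext <;> simp [mul_add, add_mul] <;> abel

lemma add_mul' (a b u : Oct) : (a + b) * u = a * u + b * u := by
  ext <;> simp [mul_add, add_mul] <;> abel

lemma mul_smul' (r : ℝ) (a u : Oct) : a * (r • u) = r • (a * u) := by
  ext <;> simp [mul_smul_comm, smul_mul_assoc, smul_sub, smul_add]

lemma smul_mul' (r : ℝ) (a u : Oct) : (r • a) * u = r • (a * u) := by
  ext <;> simp [mul_smul_comm, smul_mul_assoc, smul_sub, smul_add]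

/-- Left multiplication as a real-linear map. -/
def Llin (a : Oct) : Oct →ₗ[ℝ] Oct where
  toFun v := a * v
  map_add' u v := mul_add' a u v
  map_smul' r u := mul_smul' r a u

/-- The imaginary quaternion units. -/
def qi : ℍ[ℝ] := ⟨0, 1, 0, 0⟩
def qj : ℍ[ℝ] := ⟨0, 0, 1, 0⟩
def qk : ℍ[ℝ] := ⟨0, 0, 0, 1⟩

/-- The standard imaginary basis units of the octonions. -/
def i : Oct := ⟨qi, 0⟩
def j : Oct := ⟨qj, 0⟩
def k : Oct := ⟨qk, 0⟩
def l : Oct := ⟨0, 1⟩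
def il : Oct := ⟨0, qi⟩
def jl : Oct := ⟨0, qj⟩
def kl : Oct := ⟨0, qk⟩

/-- The standard basis of the octonions. -/
def basisSet : Set Oct := {1, i, j, k, l, il, jl, kl}

/-- The imaginary standard basis units. -/
def imSet : Set Oct := {i, j, k, l, il, jl, kl}

end Oct

/-! Octonions are alternative, so `L a ∘ L a = L (a * a)`; polarizing gives
`L p ∘ L q + L q ∘ L p = L (p * q + q * p)`. For pure imaginary `p, q` one has
`p * q + q * p = -(p * conj q + q * conj p) = -2 ⟨p, q⟩`, which vanishes by orthogonality. -/

namespace Oct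

lemma mul_neg' (a b : Oct) : a * -b = -(a * b) := by
  ext <;> simp <;> ring

lemma zero_mul' (a : Oct) : 0 * a = 0 := by
  ext <;> simp

lemma mul_mul_self_left (a v : Oct) : a * (a * v) = a * a * v := by
  ext <;>
    simp only [mul_x, mul_y, Quaternion.re_mul, Quaternion.imI_mul, Quaternion.imJ_mul,
      Quaternion.imK_mul, Quaternion.re_sub, Quaternion.imI_sub, Quaternion.imJ_sub,
      Quaternion.imK_sub, Quaternion.re_add, Quaternion.imI_add, Quaternion.imJ_add,
      Quaternion.imK_add, Quaternion.re_star, Quaternion.imI_star, Quaternion.imJ_star,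
      Quaternion.imK_star] <;>
    ring

lemma mul_mul_add_mul_mul (p q v : Oct) : p * (q * v) + q * (p * v) = (p * q + q * p) * v := by
  have h := mul_mul_self_left (p + q) v
  simp only [add_mul', mul_add', ← mul_mul_self_left p v, ← mul_mul_self_left q v] at h
  rw [add_mul']
  have hcancel := congrArg (· - (p * (p * v) + q * (q * v))) h
  abel_nf at hcancel ⊢
  exact hcancel

lemma L_comp_add_L_comp (p q : Oct) : L p ∘ L q + L q ∘ L p = L (p * q + q * p) :=
  funext (mul_mul_add_mul_mul p q)

lemma mul_conj_add_mul_conj (a b : Oct) : a * conj b + b * conj a = (2 * inner a b) • 1 := by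
  ext <;> simp [inner, re, conj] <;> ring

lemma mul_add_mul_eq_zero {p q : Oct} (hp : conj p = -p) (hq : conj q = -q)
    (hpq : inner p q = 0) : p * q + q * p = 0 := by
  have h := mul_conj_add_mul_conj p q
  rwa [hp, hq, hpq, mul_neg', mul_neg', mul_zero, zero_smul, ← neg_add, neg_eq_zero] at h

end Oct

/-- For orthogonal pure imaginary octonions `p, q`, the left multiplication
operators anticommute: `L p ∘ L q = -(L q ∘ L p)`. -/
theorem Lp_comp_Lq_anticomm (p q : Oct)
    (hp : Oct.conj p = -p) (hq : Oct.conj q = -q) (hpq : Oct.inner p q = 0) :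
    Oct.L p ∘ Oct.L q = -(Oct.L q ∘ Oct.L p) := by
  rw [eq_neg_iff_add_eq_zero, Oct.L_comp_add_L_comp, Oct.mul_add_mul_eq_zero hp hq hpq]
  exact funext Oct.zero_mul'
end
end

section
/- In the octonions with standard basis \(1, i, j, k, \ell, i\ell, j\ell, k\ell\), the left multiplication operator by \(\ell\) satisfies \(L_\ell = \tfrac{1}{2}\,(-R_\ell + R_i \circ R_{i\ell} + R_j \circ R_{j\ell} + R_k \circ R_{k\ell})\), where composition \(R_a \circ R_b\) means \(x \mapsto (xb)a\). -/
noncomputable section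
open Quaternion

/-!
Write `v = (a, b)` in the Cayley–Dickson pair of quaternions. Then `ℓ v = (-b̄, ā)`, `v ℓ = (-b, a)`
and, for an imaginary quaternion unit `e`, `(v (e ℓ)) e = (e b e, -(e a e))`. So the claim reduces
to the quaternion identity `i a i + j a j + k a k = -a - 2 ā`: sandwiching by the three units
fixes the imaginary part of `a` and multiplies its real part by `-3`.
-/

namespace Oct

lemma qi_mul_mul_qi_add_qj_mul_mul_qj_add_qk_mul_mul_qk (a : ℍ[ℝ]) :
    qi * a * qi + qj * a * qj + qk * a * qk = -a - (2 : ℝ) • star a := by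
  ext <;> simp <;> simp only [qi, qj, qk] <;> ring

lemma l_mul (v : Oct) : l * v = ⟨-star v.y, star v.x⟩ := by
  ext <;> simp [l]

lemma mul_l (v : Oct) : v * l = ⟨-v.y, v.x⟩ := by
  ext <;> simp [l]

lemma mul_mk_zero_mul_mk_zero_of_re_eq_zero {q : ℍ[ℝ]} (hq : q.re = 0) (v : Oct) :
    v * ⟨0, q⟩ * ⟨q, 0⟩ = ⟨q * v.y * q, -(q * v.x * q)⟩ := by
  ext <;> simp [Quaternion.star_eq_neg.2 hq, mul_assoc]

end Oct

open Oct in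
/-- `L ℓ = ½ (-R ℓ + R i ∘ R iℓ + R j ∘ R jℓ + R k ∘ R kℓ)`. -/
theorem Ll_eq_right_mults :
    L l = ((1 : ℝ)/2) • (-(R l) + R i ∘ R il + R j ∘ R jl + R k ∘ R kl) := by
  funext v
  have hsandwich (q : ℍ[ℝ]) (hq : q.re = 0) := mul_mk_zero_mul_mk_zero_of_re_eq_zero hq v
  simp only [L, R, Pi.smul_apply, Pi.add_apply, Pi.neg_apply, Function.comp_apply, i, j, k, il, jl,
    kl, l_mul, mul_l, hsandwich qi rfl, hsandwich qj rfl, hsandwich qk rfl]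
  refine Oct.ext ?_ ?_
  · simp only [smul_x, add_x, neg_x]
    linear_combination (norm := module)
      (-1 / 2 : ℝ) • qi_mul_mul_qi_add_qj_mul_mul_qj_add_qk_mul_mul_qk v.y
  · simp only [smul_y, add_y, neg_y]
    linear_combination (norm := module)
      (1 / 2 : ℝ) • qi_mul_mul_qi_add_qj_mul_mul_qj_add_qk_mul_mul_qk v.x
end
end

section
/- In the octonions, \(L_i \circ L_{i\ell} = \tfrac{1}{2}\,(-R_\ell + R_i\circ R_{i\ell} - R_j\circ R_{j\ell} - R_k\circ R_{k\ell})\) as linear maps, where \(1,i,j,k,\ell,i\ell,j\ell,k\ell\) is the standard basis. -/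
noncomputable section
open Quaternion

/-! Write `v = (x, y)`. By the Cayley–Dickson formula `L i ∘ L iℓ` sends `v` to
`(-i ȳ i, i x̄ i)`, `R ℓ` sends it to `(-y, x)`, and for `u = i, j, k` the map `R u ∘ R uℓ`
sends it to `(u y u, -u x u)`. The claim is thus the quaternion identity
`2 i q̄ i = j q j + k q k - q - i q i`, applied to `q = y` and `q = x`. -/

namespace Oct

lemma star_qi : star qi = -qi := by simp [Quaternion.ext_iff]; simp [qi]
lemma star_qj : star qj = -qj := by simp [Quaternion.ext_iff]; simp [qj]
lemma star_qk : star qk = -qk := by simp [Quaternion.ext_iff]; simp [qk]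

lemma two_smul_qi_mul_star_mul_qi (q : ℍ[ℝ]) :
    (2 : ℝ) • (qi * star q * qi) = qj * q * qj + qk * q * qk - q - qi * q * qi := by
  ext <;> simp [Quaternion.re_mul, Quaternion.imI_mul, Quaternion.imJ_mul, Quaternion.imK_mul] <;>
    simp [qi, qj, qk] <;> ring

lemma L_mk_zero_L_zero_mk (u : ℍ[ℝ]) (v : Oct) :
    L ⟨u, 0⟩ (L ⟨0, u⟩ v) = ⟨-(u * star v.y * u), u * star v.x * u⟩ := by
  ext <;> simp [L, mul_assoc]

lemma R_mk_zero_R_zero_mk (u : ℍ[ℝ]) (v : Oct) :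
    R ⟨u, 0⟩ (R ⟨0, u⟩ v) = ⟨-(star u * v.y * u), u * v.x * star u⟩ := by
  ext <;> simp [R, mul_assoc]

lemma R_l_apply (v : Oct) : R l v = ⟨-v.y, v.x⟩ := by
  ext <;> simp [R, l]

end Oct

open Oct in
/-- `L i ∘ L iℓ = ½ (-R ℓ + R i ∘ R iℓ - R j ∘ R jℓ - R k ∘ R kℓ)`. -/
theorem Li_Lil_eq_right_mults :
    L i ∘ L il
      = ((1 : ℝ)/2) • (-(R l) + R i ∘ R il - R j ∘ R jl - R k ∘ R kl) := by
  funext v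
  simp only [Function.comp_apply, Pi.smul_apply, Pi.add_apply, Pi.sub_apply, Pi.neg_apply,
    i, j, k, il, jl, kl, L_mk_zero_L_zero_mk, R_mk_zero_R_zero_mk, R_l_apply]
  refine Oct.ext ?_ ?_
  · simp only [smul_x, add_x, sub_x, neg_x, star_qi, star_qj, star_qk, neg_mul, neg_neg]
    linear_combination (norm := module) (-(1 / 2 : ℝ)) • two_smul_qi_mul_star_mul_qi v.y
  · simp only [smul_y, add_y, sub_y, neg_y, star_qi, star_qj, star_qk, mul_neg]
    linear_combination (norm := module) (1 / 2 : ℝ) • two_smul_qi_mul_star_mul_qi v.x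
end
end
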